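/- arXiv:quant-ph/0510197 — 5 statements merged into one kernel-verified Lean document; each statement's English description precedes it below -/
import Mathlib

section
/- Let A be a finite-dimensional factor with tracial state τ, B ⊆ A a subfactor, and E_B the τ-preserving conditional expectation onto B. For every state φ on A (not necessarily faithful), Ŝ(φ|_B) − Ŝ(φ) = H(ρ_φ, ρ_{φ|_B}) = H(φ, φ ∘ E_B). -/
open scoped ComplexOrder

/-- The full matrix algebra `M_N(ℂ)`, our model of a finite-dimensional factor. -/
abbrev Mat (N : ℕ) := Matrix (Fin N) (Fin N) ℂ

variable {N : ℕ}

/-- The tracial state `τ` on `Mat N`. -/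
noncomputable def tau (x : Mat N) : ℂ := x.trace / N

/-- Matrix logarithm via the continuous functional calculus. -/
noncomputable def mlog (x : Mat N) : Mat N := cfc Real.log x

/-- Matrix square root via the continuous functional calculus. -/
noncomputable def msqrt (x : Mat N) : Mat N := cfc Real.sqrt x

/-- Matrix inverse square root via the continuous functional calculus. -/
noncomputable def misqrt (x : Mat N) : Mat N := cfc (fun t : ℝ => (Real.sqrt t)⁻¹) x

/-- The entropy `Ŝ(ψ) = -ψ(log ρ_ψ) = -τ(ρ log ρ)` of the state with τ-density `ρ`. -/
noncomputable def Shat (ρ : Mat N) : ℝ := -(tau (ρ * mlog ρ)).re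

/-- The von Neumann entropy `S(ψ|_B) = -Tr_B(D log D) = Ŝ(ψ|_B) + log k` of the
restriction of a state to a subfactor `B ≅ M_k`, expressed through the τ-density `ρ`
of the restriction and the matrix size `k` of the subfactor. -/
noncomputable def Sres (ρ : Mat N) (k : ℕ) : ℝ := Shat ρ + Real.log k

/-- `ρ` is the density with respect to the tracial state `τ` of a state of `Mat N`. -/
def IsTauDensity (ρ : Mat N) : Prop := ρ.PosSemidef ∧ tau ρ = 1

/-- `E` is the τ-preserving conditional expectation onto the unital *-subalgebra `B`:
it maps into `B`, fixes `B` pointwise, and `Tr(b x) = Tr(b (E x))` for all `b ∈ B`.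
These properties determine `E` uniquely. -/
def IsCondExp (B : StarSubalgebra ℂ (Mat N)) (E : Mat N →ₗ[ℂ] Mat N) : Prop :=
  (∀ x, E x ∈ B) ∧ (∀ b ∈ B, E b = b) ∧
    (∀ x : Mat N, ∀ b ∈ B, (b * x).trace = (b * E x).trace)

/-- `B` is a subfactor: its relative center is trivial (so `B` is a full matrix algebra). -/
def IsFactorSub (B : StarSubalgebra ℂ (Mat N)) : Prop :=
  ∀ x ∈ B, (∀ y ∈ B, x * y = y * x) → ∃ c : ℂ, x = c • (1 : Mat N)

/-- The commuting square condition: `B = AB ⊓ BC` and `E_AB ∘ E_BC = E_BC ∘ E_AB = E_B`. -/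
def CommSquare (AB BC B : StarSubalgebra ℂ (Mat N))
    (EAB EBC EB : Mat N →ₗ[ℂ] Mat N) : Prop :=
  IsCondExp AB EAB ∧ IsCondExp BC EBC ∧ IsCondExp B EB ∧
    B = AB ⊓ BC ∧ (∀ x, EAB (EBC x) = EB x) ∧ (∀ x, EBC (EAB x) = EB x)

open Classical in
/-- Relative entropy `H(ρ₁, ρ₂) = τ(ρ₁ (log ρ₁ - log ρ₂))` of two τ-densities, equal to `+∞`
unless the support of `ρ₁` is dominated by the support of `ρ₂` (for positive semidefinite
matrices the support condition is the inclusion of kernels `ker ρ₂ ⊆ ker ρ₁`). -/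
noncomputable def relEnt (ρ₁ ρ₂ : Mat N) : EReal :=
  if ∀ v : Fin N → ℂ, ρ₂.mulVec v = 0 → ρ₁.mulVec v = 0 then
    (((tau (ρ₁ * (mlog ρ₁ - mlog ρ₂))).re : ℝ) : EReal)
  else ⊤

/-- Complete positivity of a linear map on `Mat N`. -/
def IsCP (E : Mat N →ₗ[ℂ] Mat N) : Prop :=
  ∀ (k : ℕ) (x a : Fin k → Mat N),
    (∑ i, ∑ j, star (a i) * E (star (x i) * x j) * a j).PosSemidef

/-- `p` is a minimal projection of the subalgebra `B`. -/
def IsMinProj (B : StarSubalgebra ℂ (Mat N)) (p : Mat N) : Prop :=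
  p ∈ B ∧ p.IsHermitian ∧ p * p = p ∧ p ≠ 0 ∧
    ∀ q ∈ B, q.IsHermitian → q * q = q → q * p = q → q = 0 ∨ q = p

/-- The subfactor `B` of `Mat N` has matrix size `k` (i.e. `B ≅ M_k`) in the sense that its
minimal projections have ambient matrix trace `N / k`; this encodes the assumption that the
ambient matrix trace restricts on `B` to `N/k` times the canonical matrix trace of `B`. -/
def HasMatSize (B : StarSubalgebra ℂ (Mat N)) (k : ℕ) : Prop :=
  ∀ p, IsMinProj B p → Matrix.trace p = ((N : ℂ) / k)

/-- `Θ` is a grading: an involutive *-automorphism. -/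
def IsGrading (Θ : Mat N ≃⋆ₐ[ℂ] Mat N) : Prop := ∀ x, Θ (Θ x) = x

/-- The subalgebra `A` is invariant under the grading. -/
def ThetaInvariant (Θ : Mat N ≃⋆ₐ[ℂ] Mat N) (A : StarSubalgebra ℂ (Mat N)) : Prop :=
  ∀ x ∈ A, Θ x ∈ A

/-- Graded commutation relations between (the subalgebras of) two disjoint regions:
even elements of one commute with all elements of the other, odd elements anticommute. -/
def GradedComm (Θ : Mat N ≃⋆ₐ[ℂ] Mat N) (A C : StarSubalgebra ℂ (Mat N)) : Prop :=
  ∀ x ∈ A, ∀ y ∈ C,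
    ((Θ x = x ∨ Θ y = y) → x * y = y * x) ∧
      (Θ x = -x → Θ y = -y → x * y + y * x = 0)

/-- `ω` is a state (positive normalized linear functional). -/
def IsState (ω : Mat N →ₗ[ℂ] ℂ) : Prop :=
  ω 1 = 1 ∧ ∀ x : Mat N, 0 ≤ ω (star x * x)

/-- Markov property of the state `ω` with respect to a triplet with first algebra `AA` and
pair algebra `AB`: there is a quasi-conditional expectation (a completely positive map into
`AB` which is a module map over `AA`) fixing `AA` pointwise and preserving `ω`. -/
def IsMarkovState (AA AB : StarSubalgebra ℂ (Mat N)) (ω : Mat N →ₗ[ℂ] ℂ) : Prop :=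
  ∃ E : Mat N →ₗ[ℂ] Mat N, IsCP E ∧ (∀ x, E x ∈ AB) ∧
    (∀ c ∈ AA, ∀ x, E (c * x) = c * E x) ∧ (∀ c ∈ AA, E c = c) ∧
    ∀ x, ω (E x) = ω x

/-- Markov property, formulated for the state with τ-density `ρ`. -/
def IsMarkovDensity (AA AB : StarSubalgebra ℂ (Mat N)) (ρ : Mat N) : Prop :=
  ∃ E : Mat N →ₗ[ℂ] Mat N, IsCP E ∧ (∀ x, E x ∈ AB) ∧
    (∀ c ∈ AA, ∀ x, E (c * x) = c * E x) ∧ (∀ c ∈ AA, E c = c) ∧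
    ∀ x, tau (ρ * E x) = tau (ρ * x)

/-- The restriction of `ω` to the subalgebra generated by `AA` and `AC` is separable:
a convex combination of product states for the pair `(AA, AC)`. -/
def SeparableOn (AA AC : StarSubalgebra ℂ (Mat N)) (ω : Mat N →ₗ[ℂ] ℂ) : Prop :=
  ∃ (n : ℕ) (lam : Fin n → ℝ) (ωi : Fin n → (Mat N →ₗ[ℂ] ℂ)),
    (∀ i, 0 ≤ lam i) ∧ (∑ i, lam i = 1) ∧ (∀ i, IsState (ωi i)) ∧
    (∀ i, ∀ x ∈ AA, ∀ y ∈ AC, ωi i (x * y) = ωi i x * ωi i y) ∧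
    ∀ z ∈ (AA ⊔ AC : StarSubalgebra ℂ (Mat N)), ω z = ∑ i, (lam i : ℂ) * ωi i z

/-- The conditional expectation `E` is sufficient for the pair of states with τ-densities
`ρ₁, ρ₂`: some completely positive trace-preserving (recovery) map `T` recovers the densities
from their compressions `E ρ₁`, `E ρ₂` (recall that the τ-density of `ψ ∘ E` is `E ρ_ψ`). -/
def IsSufficient (E : Mat N →ₗ[ℂ] Mat N) (ρ₁ ρ₂ : Mat N) : Prop :=
  ∃ T : Mat N →ₗ[ℂ] Mat N, IsCP T ∧ (∀ x, (T x).trace = x.trace) ∧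
    T (E ρ₁) = ρ₁ ∧ T (E ρ₂) = ρ₂

/-! The density of `φ ∘ E` is `E ρ` by trace duality, and since `log (E ρ)` lies in `B`,
`τ(ρ log (E ρ)) = τ(E ρ log (E ρ))`, which turns the relative entropy into the entropy difference.
For a non-faithful `φ` it remains to check the support condition `ker (E ρ) ⊆ ker ρ`: the
projection `q` onto `ker (E ρ)` lies in `B`, so `τ(q ρ q) = τ(q (E ρ) q) = 0`, and positivity of
`ρ` forces `ρ q = 0`. -/

namespace Matrix

variable {n 𝕜 : Type*} [Fintype n] [DecidableEq n] [RCLike 𝕜]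

theorem cfc_mem_starSubalgebra {B : StarSubalgebra 𝕜 (Matrix n n 𝕜)} (f : ℝ → ℝ)
    {a : Matrix n n 𝕜} (ha : a ∈ B) : cfc f a ∈ B :=
  have : IsClosed (B : Set (Matrix n n 𝕜)) :=
    B.toSubalgebra.toSubmodule.closed_of_finiteDimensional
  cfc_mem f ha

theorem continuousOn_spectrum (f : ℝ → ℝ) (a : Matrix n n 𝕜) :
    ContinuousOn f (spectrum ℝ a) :=
  (finite_real_spectrum (A := a)).continuousOn f

/-- `1 - a⁺ a`, where `a⁺ = cfc (·⁻¹) a` is the pseudo-inverse of `a` (thanks to `0⁻¹ = 0`);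
for self-adjoint `a` this is the orthogonal projection onto `ker a`. -/
noncomputable def kerProj (a : Matrix n n 𝕜) : Matrix n n 𝕜 := 1 - cfc (·⁻¹ : ℝ → ℝ) a * a

theorem kerProj_mem {B : StarSubalgebra 𝕜 (Matrix n n 𝕜)} {a : Matrix n n 𝕜} (ha : a ∈ B) :
    kerProj a ∈ B :=
  sub_mem (one_mem B) (mul_mem (cfc_mem_starSubalgebra _ ha) ha)

theorem mul_kerProj {a : Matrix n n 𝕜} (ha : IsSelfAdjoint a) : a * kerProj a = 0 := by
  have h : a * cfc (·⁻¹ : ℝ → ℝ) a * a = a := calc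
    _ = cfc (fun t : ℝ => t * t⁻¹ * t) a := by
      rw [cfc_mul _ _ a (continuousOn_spectrum _ _) (continuousOn_spectrum _ _),
        cfc_mul _ _ a (continuousOn_spectrum _ _) (continuousOn_spectrum _ _), cfc_id' ℝ a ha]
    _ = a := by simp only [mul_inv_mul_cancel, cfc_id' ℝ a ha]
  rw [kerProj, mul_sub, mul_one, ← mul_assoc, h, sub_self]

theorem kerProj_mulVec {a : Matrix n n 𝕜} {v : n → 𝕜} (hv : a *ᵥ v = 0) :
    kerProj a *ᵥ v = v := by
  rw [kerProj, sub_mulVec, one_mulVec, ← mulVec_mulVec, hv, mulVec_zero, sub_zero]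

open scoped MatrixOrder in
theorem PosSemidef.mul_eq_zero_of_trace_conjTranspose_mul_mul_eq_zero {A M : Matrix n n 𝕜}
    (hA : A.PosSemidef) (h : (Mᴴ * A * M).trace = 0) : A * M = 0 := by
  obtain ⟨S, rfl⟩ := CStarAlgebra.nonneg_iff_eq_star_mul_self.mp hA.nonneg
  rw [star_eq_conjTranspose] at h ⊢
  have hSM : S * M = 0 := by
    rw [← trace_conjTranspose_mul_self_eq_zero_iff, conjTranspose_mul, ← h]
    simp only [mul_assoc]
  rw [mul_assoc, hSM, mul_zero]

end Matrix

theorem tau_sub (x y : Mat N) : tau (x - y) = tau x - tau y := by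
  simp only [tau, Matrix.trace_sub, sub_div]

theorem ext_iff_tau_mul_right {A B : Mat N} : A = B ↔ ∀ x, tau (A * x) = tau (B * x) := by
  rcases N.eq_zero_or_pos with rfl | hN
  · exact ⟨fun _ _ => rfl, fun _ => Subsingleton.elim A B⟩
  · have hN : (N : ℂ) ≠ 0 := Nat.cast_ne_zero.mpr hN.ne'
    simp only [Matrix.ext_iff_trace_mul_right (A := A), tau, div_left_inj' hN]

theorem mlog_mem {B : StarSubalgebra ℂ (Mat N)} {a : Mat N} (ha : a ∈ B) : mlog a ∈ B :=
  Matrix.cfc_mem_starSubalgebra Real.log ha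

namespace IsCondExp

open Matrix

variable {B : StarSubalgebra ℂ (Mat N)} {E : Mat N →ₗ[ℂ] Mat N}

theorem trace_mul_of_mem (hE : IsCondExp B E) (x : Mat N) {b : Mat N} (hb : b ∈ B) :
    (x * b).trace = (E x * b).trace := by
  rw [trace_mul_comm, hE.2.2 x b hb, trace_mul_comm]

theorem eq_apply_of_forall_tau_mul (hE : IsCondExp B E) {ρ σ : Mat N}
    (h : ∀ x, tau (ρ * E x) = tau (σ * x)) : σ = E ρ := by
  refine ext_iff_tau_mul_right.mpr fun x => ?_
  rw [← h, tau, tau, hE.trace_mul_of_mem ρ (hE.1 x), trace_mul_comm,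
    ← hE.trace_mul_of_mem x (hE.1 ρ), trace_mul_comm]

theorem tau_mul_mlog_apply (hE : IsCondExp B E) (ρ : Mat N) :
    tau (ρ * mlog (E ρ)) = tau (E ρ * mlog (E ρ)) := by
  rw [tau, tau, hE.trace_mul_of_mem ρ (mlog_mem (hE.1 ρ))]

theorem mulVec_eq_zero_of_apply_mulVec_eq_zero (hE : IsCondExp B E) {ρ : Mat N}
    (hρ : ρ.PosSemidef) (hEρ : IsSelfAdjoint (E ρ)) {v : Fin N → ℂ} (hv : E ρ *ᵥ v = 0) :
    ρ *ᵥ v = 0 := by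
  set q := kerProj (E ρ)
  have hq : q * qᴴ ∈ B := mul_mem (kerProj_mem (hE.1 ρ)) (star_mem (kerProj_mem (hE.1 ρ)))
  have hρq : ρ * q = 0 := by
    refine hρ.mul_eq_zero_of_trace_conjTranspose_mul_mul_eq_zero ?_
    rw [trace_mul_cycle, trace_mul_comm, hE.trace_mul_of_mem ρ hq, ← mul_assoc,
      mul_kerProj hEρ, zero_mul, trace_zero]
  rw [← kerProj_mulVec hv, mulVec_mulVec, hρq, zero_mulVec]

end IsCondExp

/-- Here `E ρ` is the τ-density of `φ|_B` and `σ` that of `φ ∘ E`. -/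
theorem stmt5_general {N : ℕ} (B : StarSubalgebra ℂ (Mat N))
    (E : Mat N →ₗ[ℂ] Mat N) (hE : IsCondExp B E)
    (ρ : Mat N) (hρ : IsTauDensity ρ)
    (σ : Mat N) (hσpsd : σ.PosSemidef) (hσ : ∀ x : Mat N, tau (ρ * E x) = tau (σ * x)) :
    ((Shat (E ρ) - Shat ρ : ℝ) : EReal) = relEnt ρ (E ρ) ∧
      relEnt ρ (E ρ) = relEnt ρ σ := by
  obtain rfl : σ = E ρ := hE.eq_apply_of_forall_tau_mul hσ
  refine ⟨?_, rfl⟩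
  have hsupp (v : Fin N → ℂ) : (E ρ).mulVec v = 0 → ρ.mulVec v = 0 :=
    hE.mulVec_eq_zero_of_apply_mulVec_eq_zero hρ.1 hσpsd.1.isSelfAdjoint
  rw [relEnt, if_pos hsupp, EReal.coe_eq_coe_iff, Shat, Shat, mul_sub, tau_sub,
    hE.tau_mul_mlog_apply, Complex.sub_re]
  ring

/-- for every (not necessarily faithful) state `φ` with τ-density `ρ` on a
finite-dimensional factor and subfactor `B` with τ-preserving conditional expectation `E`,
`Ŝ(φ|_B) − Ŝ(φ) = H(ρ_φ, ρ_{φ|_B}) = H(φ, φ ∘ E)`.  Here `ρ_{φ|_B} = E ρ` and `σ` is the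
τ-density of `φ ∘ E`, characterized by `τ(ρ · E x) = τ(σ x)` for all `x`. -/
theorem stmt5 {N : ℕ} (hN : 0 < N) (B : StarSubalgebra ℂ (Mat N)) (hBf : IsFactorSub B)
    (E : Mat N →ₗ[ℂ] Mat N) (hE : IsCondExp B E)
    (ρ : Mat N) (hρ : IsTauDensity ρ)
    (σ : Mat N) (hσpsd : σ.PosSemidef) (hσ : ∀ x : Mat N, tau (ρ * E x) = tau (σ * x)) :
    ((Shat (E ρ) - Shat ρ : ℝ) : EReal) = relEnt ρ (E ρ) ∧
      relEnt ρ (E ρ) = relEnt ρ σ :=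
  stmt5_general B E hE ρ hρ σ hσpsd hσ
end

section
/- Let A_Z be a finite-dimensional factor with subfactors A_AB, A_BC, A_B satisfying the commuting square condition. For every state ψ on A_Z, equality holds in the strong subadditivity inequality, i.e. Ŝ(ψ) − Ŝ(ψ|_{A_AB}) − Ŝ(ψ|_{A_BC}) + Ŝ(ψ|_{A_B}) = 0, if and only if H(ρ_ψ, ρ_{ψ|_{A_BC}}) = H(ρ_{ψ|_{A_AB}}, ρ_{ψ|_{A_B}}), equivalently H(ψ, ψ ∘ E_BC) = H(ψ ∘ E_AB, ψ ∘ E_B). -/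
open scoped ComplexOrder

variable {N : ℕ}

/-! For the τ-preserving conditional expectation `E` onto `S` and a density `σ`, both `E σ` and
`log (E σ)` lie in `S`, so `τ(σ log Eσ) = τ(Eσ log Eσ)` and `H(σ, Eσ) = Ŝ(Eσ) - Ŝ(σ)`. The
support condition `ker Eσ ⊆ ker σ` holds because the kernel projection `p` of `Eσ` lies in `S`,
whence `τ(pσ) = τ(p Eσ) = 0`. Applied to `(ρ, E_BC)` and, via `E_BC ∘ E_AB = E_B`, to
`(E_AB ρ, E_BC)`, the two relative entropies become `Ŝ(E_BC ρ) - Ŝ(ρ)` and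
`Ŝ(E_B ρ) - Ŝ(E_AB ρ)`, whose difference is the strong subadditivity expression. -/

open scoped MatrixOrder

namespace Matrix

variable {n 𝕜 : Type*} [Fintype n] [RCLike 𝕜]

lemma trace_star_mul_self_mul_star_mul_self (C D : Matrix n n 𝕜) :
    (star C * C * (star D * D)).trace = (star (C * star D) * (C * star D)).trace := by
  rw [star_mul, star_star, ← mul_assoc, trace_mul_comm, mul_assoc, mul_assoc]

lemma trace_mul_star (A B : Matrix n n 𝕜) : (A * star B).trace = star (star A * B).trace := by
  rw [← trace_conjTranspose, ← star_eq_conjTranspose, star_mul, star_star, trace_mul_comm]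

variable [DecidableEq n]

lemma PosSemidef.trace_mul_nonneg {A B : Matrix n n 𝕜} (hA : A.PosSemidef) (hB : B.PosSemidef) :
    0 ≤ (A * B).trace := by
  obtain ⟨C, rfl⟩ := CStarAlgebra.nonneg_iff_eq_star_mul_self.mp hA.nonneg
  obtain ⟨D, rfl⟩ := CStarAlgebra.nonneg_iff_eq_star_mul_self.mp hB.nonneg
  rw [trace_star_mul_self_mul_star_mul_self]
  exact (posSemidef_conjTranspose_mul_self _).trace_nonneg

lemma PosSemidef.mul_eq_zero_of_trace_mul_eq_zero {A B : Matrix n n 𝕜} (hA : A.PosSemidef)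
    (hB : B.PosSemidef) (h : (A * B).trace = 0) : A * B = 0 := by
  obtain ⟨C, rfl⟩ := CStarAlgebra.nonneg_iff_eq_star_mul_self.mp hA.nonneg
  obtain ⟨D, rfl⟩ := CStarAlgebra.nonneg_iff_eq_star_mul_self.mp hB.nonneg
  rw [trace_star_mul_self_mul_star_mul_self] at h
  have hCD : C * star D = 0 := trace_conjTranspose_mul_self_eq_zero_iff.mp h
  rw [mul_assoc, ← mul_assoc C, hCD, zero_mul, mul_zero]

lemma continuousOn_spectrum_real (f : ℝ → ℝ) (A : Matrix n n 𝕜) :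
    ContinuousOn f (spectrum ℝ A) :=
  finite_real_spectrum.continuousOn f

lemma IsHermitian.cfc_mulVec_of_mulVec_eq_zero {A : Matrix n n 𝕜} (hA : A.IsHermitian)
    (f : ℝ → ℝ) {v : n → 𝕜} (hv : A *ᵥ v = 0) : cfc f A *ᵥ v = (f 0 : 𝕜) • v := by
  have hc := fun g : ℝ → ℝ => continuousOn_spectrum_real g A
  have hf : cfc f A = cfc (fun t => (f t - f 0) / t * t + f 0) A := by
    refine cfc_congr fun t _ => ?_
    rcases eq_or_ne t 0 with rfl | ht
    · simp
    · rw [div_mul_cancel₀ _ ht, sub_add_cancel]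
  rw [hf, cfc_add A (fun t => (f t - f 0) / t * t) (fun _ => f 0) (hc _) (hc _),
    cfc_mul (fun t => (f t - f 0) / t) (fun t => t) A (hc _) (hc _), cfc_id' ℝ A,
    cfc_const (f 0) A, add_mulVec, ← mulVec_mulVec, hv]
  simp [Algebra.algebraMap_eq_smul_one, smul_mulVec]

instance isClosed_starSubalgebra (S : StarSubalgebra 𝕜 (Matrix n n 𝕜)) :
    IsClosed (S : Set (Matrix n n 𝕜)) :=
  S.toSubmodule.closed_of_finiteDimensional

variable {S : StarSubalgebra 𝕜 (Matrix n n 𝕜)}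

lemma eq_of_forall_trace_mul_eq {y z : Matrix n n 𝕜} (hy : y ∈ S) (hz : z ∈ S)
    (h : ∀ b ∈ S, (b * y).trace = (b * z).trace) : y = z := by
  have hyz := h (star (y - z)) (star_mem (sub_mem hy hz))
  rw [← sub_eq_zero, ← trace_sub, ← mul_sub] at hyz
  exact sub_eq_zero.mp (trace_conjTranspose_mul_self_eq_zero_iff.mp hyz)

lemma posSemidef_of_forall_trace_mul_nonneg {a : Matrix n n 𝕜} (ha : a ∈ S)
    (hsa : a.IsHermitian) (h : ∀ b ∈ S, b.PosSemidef → 0 ≤ (b * a).trace) :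
    a.PosSemidef := by
  have hneg : (a⁻).PosSemidef := nonneg_iff_posSemidef.mp (CFC.negPart_nonneg a)
  have hmul : a⁻ * a = -(a⁻ * a⁻) := by
    calc a⁻ * a = a⁻ * (a⁺ - a⁻) := by rw [CFC.posPart_sub_negPart a hsa]
      _ = -(a⁻ * a⁻) := by rw [mul_sub, CFC.negPart_mul_posPart, zero_sub]
  -- testing against `a⁻ ∈ S` forces `τ((a⁻)²) ≤ 0`
  have htr : (a⁻ * a⁻).trace = 0 := by
    have h₁ : 0 ≤ (a⁻ * a).trace := h _ (cfcₙ_mem _ ha) hneg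
    rw [hmul, trace_neg, neg_nonneg] at h₁
    exact le_antisymm h₁ (hneg.trace_mul_nonneg hneg)
  nth_rw 1 [← hneg.1.eq] at htr
  rw [← nonneg_iff_posSemidef, ← CFC.negPart_eq_zero_iff a hsa]
  exact trace_conjTranspose_mul_self_eq_zero_iff.mp htr

end Matrix

namespace IsCondExp

open Matrix

variable {S : StarSubalgebra ℂ (Mat N)} {E : Mat N →ₗ[ℂ] Mat N}

lemma apply_mem (hE : IsCondExp S E) (x : Mat N) : E x ∈ S := hE.1 x

lemma trace_mul_apply (hE : IsCondExp S E) {b : Mat N} (hb : b ∈ S) (x : Mat N) :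
    (b * E x).trace = (b * x).trace :=
  (hE.2.2 x b hb).symm

lemma map_star (hE : IsCondExp S E) (x : Mat N) : E (star x) = star (E x) := by
  refine eq_of_forall_trace_mul_eq (hE.apply_mem _) (star_mem (hE.apply_mem x)) fun b hb => ?_
  rw [hE.trace_mul_apply hb, trace_mul_star, trace_mul_star, hE.trace_mul_apply (star_mem hb)]

lemma isHermitian_apply (hE : IsCondExp S E) {σ : Mat N} (hσ : σ.IsHermitian) :
    (E σ).IsHermitian := by
  rw [IsHermitian, ← star_eq_conjTranspose, ← hE.map_star, star_eq_conjTranspose, hσ.eq]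

lemma posSemidef_apply (hE : IsCondExp S E) {σ : Mat N} (hσ : σ.PosSemidef) :
    (E σ).PosSemidef :=
  posSemidef_of_forall_trace_mul_nonneg (hE.apply_mem σ) (hE.isHermitian_apply hσ.1)
    fun _ hb hb' => hE.trace_mul_apply hb σ ▸ hb'.trace_mul_nonneg hσ

lemma mulVec_eq_zero_of_apply (hE : IsCondExp S E) {σ : Mat N} (hσ : σ.PosSemidef)
    {v : Fin N → ℂ} (hv : E σ *ᵥ v = 0) : σ *ᵥ v = 0 := by
  have hEσ := hE.posSemidef_apply hσ
  -- the projection onto `ker (E σ)`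
  set p := cfc (fun t : ℝ => if t = 0 then (1 : ℝ) else 0) (E σ)
  have hp : p.PosSemidef :=
    nonneg_iff_posSemidef.mp (cfc_nonneg fun t _ => by split_ifs <;> norm_num)
  have hpv : p *ᵥ v = v := by
    simpa using hEσ.1.cfc_mulVec_of_mulVec_eq_zero (fun t : ℝ => if t = 0 then (1 : ℝ) else 0)
      hv
  have hpEσ : p * E σ = 0 := by
    have hc := fun g : ℝ → ℝ => continuousOn_spectrum_real g (E σ)
    calc p * E σ = cfc (fun t : ℝ => (if t = 0 then (1 : ℝ) else 0) * t) (E σ) := by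
          rw [cfc_mul _ (fun t => t) _ (hc _) (hc _), cfc_id' ℝ (E σ)]
      _ = cfc (fun _ : ℝ => (0 : ℝ)) (E σ) :=
          cfc_congr fun t _ => by split_ifs with ht <;> simp [ht]
      _ = 0 := cfc_zero ℝ (E σ)
  have hσp : σ * p = 0 := hσ.mul_eq_zero_of_trace_mul_eq_zero hp <| by
    rw [trace_mul_comm, ← hE.trace_mul_apply (cfc_mem _ (hE.apply_mem σ)), hpEσ, trace_zero]
  rw [← hpv, mulVec_mulVec, hσp, zero_mulVec]

lemma trace_mul_mlog_apply (hE : IsCondExp S E) (σ : Mat N) :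
    (σ * mlog (E σ)).trace = (E σ * mlog (E σ)).trace := by
  have hlog : mlog (E σ) ∈ S := cfc_mem _ (hE.apply_mem σ)
  rw [trace_mul_comm, ← hE.trace_mul_apply hlog, trace_mul_comm]

lemma relEnt_apply (hE : IsCondExp S E) {σ : Mat N} (hσ : σ.PosSemidef) :
    relEnt σ (E σ) = ((Shat (E σ) - Shat σ : ℝ) : EReal) := by
  rw [relEnt, if_pos fun v hv => hE.mulVec_eq_zero_of_apply hσ hv, Shat, Shat, tau, tau, tau,
    mul_sub, trace_sub, hE.trace_mul_mlog_apply, sub_div, Complex.sub_re]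
  ring_nf

end IsCondExp

theorem stmt7_general {N : ℕ} (AB BC B : StarSubalgebra ℂ (Mat N))
    (EAB EBC EB : Mat N →ₗ[ℂ] Mat N)
    (hsq : CommSquare AB BC B EAB EBC EB)
    (ρ : Mat N) (hρ : IsTauDensity ρ) :
    Shat ρ - Shat (EAB ρ) - Shat (EBC ρ) + Shat (EB ρ) = 0 ↔
      relEnt ρ (EBC ρ) = relEnt (EAB ρ) (EB ρ) := by
  obtain ⟨hAB, hBC, -, -, -, hBC_AB⟩ := hsq
  have hρ_BC := hBC.relEnt_apply hρ.1
  have hAB_B : relEnt (EAB ρ) (EB ρ) = ((Shat (EB ρ) - Shat (EAB ρ) : ℝ) : EReal) := by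
    simpa only [hBC_AB] using hBC.relEnt_apply (hAB.posSemidef_apply hρ.1)
  rw [hρ_BC, hAB_B, EReal.coe_eq_coe_iff]
  constructor <;> intro h <;> linarith

/-- for a commuting square of finite-dimensional factors and any state `ψ`
with τ-density `ρ`, equality holds in strong subadditivity
`Ŝ(ψ) − Ŝ(ψ|_AB) − Ŝ(ψ|_BC) + Ŝ(ψ|_B) = 0` if and only if
`H(ρ_ψ, ρ_{ψ|BC}) = H(ρ_{ψ|AB}, ρ_{ψ|B})`, i.e. `H(ψ, ψ∘E_BC) = H(ψ∘E_AB, ψ∘E_B)`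
(the τ-densities of `ψ|_X` and of `ψ ∘ E_X` both being `E_X ρ`). -/
theorem stmt7 {N : ℕ} (hN : 0 < N) (AB BC B : StarSubalgebra ℂ (Mat N))
    (hABf : IsFactorSub AB) (hBCf : IsFactorSub BC) (hBf : IsFactorSub B)
    (EAB EBC EB : Mat N →ₗ[ℂ] Mat N)
    (hsq : CommSquare AB BC B EAB EBC EB)
    (ρ : Mat N) (hρ : IsTauDensity ρ) :
    Shat ρ - Shat (EAB ρ) - Shat (EBC ρ) + Shat (EB ρ) = 0 ↔
      relEnt ρ (EBC ρ) = relEnt (EAB ρ) (EB ρ) :=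
  stmt7_general AB BC B EAB EBC EB hsq ρ hρ
end

section
/- Let A and C be disjoint regions of a graded quantum system and ω a state on A_AC. If ω(XY) = ω(X)ω(Y) for all X ∈ A_A and Y ∈ A_C, then also ω(YX) = ω(Y)ω(X) = ω(XY) for all X ∈ A_A and Y ∈ A_C. -/
open scoped ComplexOrder

variable {N : ℕ}

lemma state_im_eq_zero {N : ℕ} (ω : Mat N →ₗ[ℂ] ℂ) (hω : IsState ω)
    {y : Mat N} (hy : star y = y) : (ω y).im = 0 := by
  have h1 := hω.2 (1 + y)
  have h2 := hω.2 (1 - y)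
  have e : star (1 + y) * (1 + y) - star (1 - y) * (1 - y) = (4 : ℂ) • y := by
    rw [star_add, star_sub, star_one, hy, Algebra.smul_def]
    have h4 : (algebraMap ℂ (Mat N)) 4 = 4 := map_ofNat _ 4
    rw [h4]
    noncomm_ring
  have e2 : ω (star (1 + y) * (1 + y)) - ω (star (1 - y) * (1 - y)) = 4 * ω y := by
    rw [← map_sub, e, map_smul, smul_eq_mul]
  have i1 : (ω (star (1 + y) * (1 + y))).im = 0 := by
    rw [Complex.le_def] at h1; exact h1.2.symm
  have i2 : (ω (star (1 - y) * (1 - y))).im = 0 := by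
    rw [Complex.le_def] at h2; exact h2.2.symm
  have him := congrArg Complex.im e2
  rw [Complex.sub_im, i1, i2] at him
  norm_num [Complex.mul_im] at him
  linarith

lemma state_star {N : ℕ} (ω : Mat N →ₗ[ℂ] ℂ) (hω : IsState ω)
    (x : Mat N) : ω (star x) = starRingEnd ℂ (ω x) := by
  set h := x + star x with hh
  set k := x - star x with hk
  have hsh : star h = h := by simp [hh, add_comm]
  have hski : star (Complex.I • k) = Complex.I • k := by
    rw [hk, star_smul, star_sub, star_star, Complex.star_def, Complex.conj_I]
    module
  have ia : (ω h).im = 0 := state_im_eq_zero ω hω hsh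
  have ib : (ω (Complex.I • k)).im = 0 := state_im_eq_zero ω hω hski
  have ib' : (ω k).re = 0 := by
    rw [map_smul] at ib; simpa [Complex.mul_im] using ib
  have e1 : ω h - ω k = 2 * ω (star x) := by
    rw [← map_sub]
    have : h - k = (2 : ℂ) • star x := by rw [hh, hk]; module
    rw [this, map_smul]; simp
  have e2 : ω h + ω k = 2 * ω x := by
    rw [← map_add]
    have : h + k = (2 : ℂ) • x := by rw [hh, hk]; module
    rw [this, map_smul]; simp
  have chh : starRingEnd ℂ (ω h) = ω h := Complex.conj_eq_iff_im.mpr ia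
  have ck : starRingEnd ℂ (ω k) = -(ω k) := by
    apply Complex.ext <;> simp [ib', Complex.conj_re, Complex.conj_im]
  have ex : ω (star x) = (ω h - ω k) / 2 := by
    rw [eq_div_iff (two_ne_zero)]; linear_combination -e1
  have ex2 : ω x = (ω h + ω k) / 2 := by
    rw [eq_div_iff (two_ne_zero)]; linear_combination -e2
  have gen : ∀ a b : ℂ, a.im = 0 → b.re = 0 →
      (a - b) / 2 = starRingEnd ℂ ((a + b) / 2) := by
    intro a b ha hb
    have hb' : starRingEnd ℂ b = -b := by
      apply Complex.ext <;> simp [hb, Complex.conj_re, Complex.conj_im]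
    rw [map_div₀, map_add, Complex.conj_eq_iff_im.mpr ha, hb',
      map_ofNat]
    ring
  rw [ex, ex2]
  exact gen (ω h) (ω k) ia ib'

/-- if a state `ω` of a graded bipartite system is a product state, i.e.
`ω(XY) = ω(X)ω(Y)` for `X ∈ S_A`, `Y ∈ S_C`, then the product property in the converse
order also holds: `ω(YX) = ω(Y)ω(X) = ω(XY)`. -/
theorem stmt12 {N : ℕ}
    (Θ : Mat N ≃⋆ₐ[ℂ] Mat N) (hΘ : IsGrading Θ)
    (SA SC : StarSubalgebra ℂ (Mat N))
    (hAinv : ThetaInvariant Θ SA) (hCinv : ThetaInvariant Θ SC)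
    (hcomm : GradedComm Θ SA SC)
    (ω : Mat N →ₗ[ℂ] ℂ) (hω : IsState ω)
    (hprod : ∀ X ∈ SA, ∀ Y ∈ SC, ω (X * Y) = ω X * ω Y) :
    ∀ X ∈ SA, ∀ Y ∈ SC, ω (Y * X) = ω Y * ω X ∧ ω (Y * X) = ω (X * Y) := by
  have hstar : ∀ x, ω (star x) = starRingEnd ℂ (ω x) := state_star ω hω
  -- key: odd-odd products have vanishing expectation product
  have hodd : ∀ a ∈ SA, ∀ b ∈ SC, Θ a = -a → Θ b = -b → ω a * ω b = 0 := by
    intro a ha b hb hΘa hΘb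
    have hsa : Θ (star a) = -(star a) := by rw [map_star, hΘa, star_neg]
    have hsb : Θ (star b) = -(star b) := by rw [map_star, hΘb, star_neg]
    have hanti : a * b + b * a = 0 :=
      (hcomm a ha b hb).2 hΘa hΘb
    have hba : b * a = -(a * b) := by linear_combination (norm := noncomm_ring) hanti
    have h2 : ω (star a * star b) = ω (star a) * ω (star b) :=
      hprod _ (star_mem ha) _ (star_mem hb)
    have key : ω (b * a) = ω a * ω b := by
      have : star (star a * star b) = b * a := by
        rw [star_mul, star_star, star_star]
      calc ω (b * a) = ω (star (star a * star b)) := by rw [this]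
        _ = starRingEnd ℂ (ω (star a * star b)) := hstar _
        _ = starRingEnd ℂ (ω (star a) * ω (star b)) := by rw [h2]
        _ = starRingEnd ℂ (starRingEnd ℂ (ω a) * starRingEnd ℂ (ω b)) := by
            rw [hstar, hstar]
        _ = ω a * ω b := by rw [map_mul]; simp
    have key2 : ω (b * a) = -(ω a * ω b) := by
      rw [hba, map_neg, hprod a ha b hb]
    have heq := key.symm.trans key2
    linear_combination heq / 2
  intro X hX Y hY
  set Xp := (2⁻¹ : ℂ) • (X + Θ X) with hXp
  set Xm := (2⁻¹ : ℂ) • (X - Θ X) with hXm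
  set Yp := (2⁻¹ : ℂ) • (Y + Θ Y) with hYp
  set Ym := (2⁻¹ : ℂ) • (Y - Θ Y) with hYm
  have hXpA : Xp ∈ SA := SMulMemClass.smul_mem _ (add_mem hX (hAinv X hX))
  have hXmA : Xm ∈ SA := SMulMemClass.smul_mem _ (sub_mem hX (hAinv X hX))
  have hYpC : Yp ∈ SC := SMulMemClass.smul_mem _ (add_mem hY (hCinv Y hY))
  have hYmC : Ym ∈ SC := SMulMemClass.smul_mem _ (sub_mem hY (hCinv Y hY))
  have hΘXp : Θ Xp = Xp := by
    rw [hXp, map_smul, map_add, hΘ, add_comm]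
  have hΘXm : Θ Xm = -Xm := by
    rw [hXm, map_smul, map_sub, hΘ, ← smul_neg, neg_sub]
  have hΘYp : Θ Yp = Yp := by
    rw [hYp, map_smul, map_add, hΘ, add_comm]
  have hΘYm : Θ Ym = -Ym := by
    rw [hYm, map_smul, map_sub, hΘ, ← smul_neg, neg_sub]
  have hXdec : X = Xp + Xm := by rw [hXp, hXm]; module
  have hYdec : Y = Yp + Ym := by rw [hYp, hYm]; module
  have c1 : Xp * Yp = Yp * Xp := (hcomm Xp hXpA Yp hYpC).1 (Or.inl hΘXp)
  have c2 : Xp * Ym = Ym * Xp := (hcomm Xp hXpA Ym hYmC).1 (Or.inl hΘXp)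
  have c3 : Xm * Yp = Yp * Xm := (hcomm Xm hXmA Yp hYpC).1 (Or.inr hΘYp)
  have c4 : Xm * Ym + Ym * Xm = 0 := (hcomm Xm hXmA Ym hYmC).2 hΘXm hΘYm
  have c4' : Ym * Xm = -(Xm * Ym) := by
    linear_combination (norm := noncomm_ring) c4
  have hYX : Y * X = X * Y - (2 : ℂ) • (Xm * Ym) := by
    calc Y * X = (Yp + Ym) * (Xp + Xm) := by rw [← hXdec, ← hYdec]
      _ = Yp * Xp + Yp * Xm + Ym * Xp + Ym * Xm := by noncomm_ring
      _ = Xp * Yp + Xm * Yp + Xp * Ym + -(Xm * Ym) := by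
          rw [c1, c2, c3, c4']
      _ = (Xp + Xm) * (Yp + Ym) - (2 : ℂ) • (Xm * Ym) := by
          rw [two_smul]; noncomm_ring
      _ = X * Y - (2 : ℂ) • (Xm * Ym) := by rw [← hXdec, ← hYdec]
  have hzero : ω Xm * ω Ym = 0 := hodd Xm hXmA Ym hYmC hΘXm hΘYm
  have hωYX : ω (Y * X) = ω (X * Y) := by
    rw [hYX, map_sub, map_smul, hprod Xm hXmA Ym hYmC, hzero]
    simp
  refine ⟨?_, hωYX⟩
  rw [hωYX, hprod X hX Y hY, mul_comm]
end

section
/- Let (A_A, A_B, A_C) be a three-composed graded (CAR) system generating A_Z, and let (Ã_A, Ã_B, Ã_C) be the Jordan–Wigner tensor-product triple defined by Ã_A := A_A, Ã_B := the algebra generated by A_B^+ and v_A A_B^−, Ã_C := the algebra generated by A_C^+ and v_AB A_C^−, so that A_Z = Ã_A ⊗ Ã_B ⊗ Ã_C, with Ã_AB = A_AB and Ã_BC := the algebra generated by A_BC^+ and v_A A_BC^−. Then for every even state ψ on A_Z: S(ψ) − S(ψ|_{A_AB}) − S(ψ|_{A_BC}) + S(ψ|_{A_B}) = 0 if and only if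 S(ψ) − S(ψ|_{Ã_AB}) − S(ψ|_{Ã_BC}) + S(ψ|_{Ã_B}) = 0. -/
open scoped ComplexOrder

variable {N : ℕ}

/-- The Jordan–Wigner transform of a region algebra: the subalgebra generated by the even
part of `B` together with `v` times the odd part of `B`. -/
noncomputable def jwAlg {N : ℕ} (Θ : Mat N ≃⋆ₐ[ℂ] Mat N) (v : Mat N)
    (B : StarSubalgebra ℂ (Mat N)) : StarSubalgebra ℂ (Mat N) :=
  StarAlgebra.adjoin ℂ
    ({x : Mat N | x ∈ B ∧ Θ x = x} ∪ (fun y => v * y) '' {y : Mat N | y ∈ B ∧ Θ y = -y})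

/-!
The even part of the state does all the work. Elements of `Ã_X = jwAlg Θ v_A A_X` have the form
`z₁ + v_A z₂` with `z₁` even and `z₂` odd in `A_X` (since `v_A` is even, commutes with `A_X`, and
`v_A²` is a scalar because `A_A` is a factor). An even state vanishes on odd elements, so it
sees only `z₁`; hence the conditional expectation of `ρ` onto `Ã_X` is the (even) conditional
expectation of `ρ` onto `A_X`. So `ψ|_{Ã_B}` and `ψ|_{Ã_BC}` have the same densities as
`ψ|_{A_B}` and `ψ|_{A_BC}`, and both sides of the equivalence are literally equal.
-/

lemma eq_zero_of_forall_trace_mul_eq_zero {S : StarSubalgebra ℂ (Mat N)} {d : Mat N}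
    (hd : d ∈ S) (h : ∀ b ∈ S, (b * d).trace = 0) : d = 0 :=
  Matrix.trace_conjTranspose_mul_self_eq_zero_iff.mp (h (star d) (star_mem hd))

lemma IsCondExp.apply_eq_of_forall_trace_mul_eq {S : StarSubalgebra ℂ (Mat N)}
    {E : Mat N →ₗ[ℂ] Mat N} (hE : IsCondExp S E) {ρ d : Mat N} (hd : d ∈ S)
    (h : ∀ b ∈ S, (b * ρ).trace = (b * d).trace) : E ρ = d := by
  refine sub_eq_zero.mp (eq_zero_of_forall_trace_mul_eq_zero (sub_mem (hE.1 ρ) hd) ?_)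
  intro b hb
  rw [mul_sub, Matrix.trace_sub, ← hE.2.2 ρ b hb, h b hb, sub_self]

section Grading

variable {Θ : Mat N ≃⋆ₐ[ℂ] Mat N} {ρ : Mat N}

lemma trace_mul_theta_eq_of_tau_mul_theta_eq (heven : ∀ x, tau (ρ * Θ x) = tau (ρ * x))
    (x : Mat N) : (Θ x * ρ).trace = (x * ρ).trace := by
  -- `tau` divides by `N`, so at `N = 0` it carries no information; but then all traces vanish.
  rcases Nat.eq_zero_or_pos N with rfl | hN
  · simp [Matrix.trace]
  · have h := heven x
    rwa [tau, tau, div_left_inj' (Nat.cast_ne_zero.mpr hN.ne'), Matrix.trace_mul_comm,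
      Matrix.trace_mul_comm ρ] at h

lemma trace_eq_zero_of_theta_eq_neg {x : Mat N} (hx : Θ x = -x) : x.trace = 0 := by
  rw [← neg_eq_self, ← Matrix.trace_neg, ← hx, Matrix.trace_map']

lemma trace_mul_eq_zero_of_theta_eq_neg (heven : ∀ x, (Θ x * ρ).trace = (x * ρ).trace)
    {x : Mat N} (hx : Θ x = -x) : (x * ρ).trace = 0 := by
  rw [← neg_eq_self, ← Matrix.trace_neg, ← neg_mul, ← hx, heven]

lemma ThetaInvariant.sup {S T : StarSubalgebra ℂ (Mat N)} (hS : ThetaInvariant Θ S)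
    (hT : ThetaInvariant Θ T) : ThetaInvariant Θ (S ⊔ T) := by
  have : S ⊔ T ≤ (S ⊔ T).comap (Θ : Mat N →⋆ₐ[ℂ] Mat N) :=
    sup_le (fun x hx => le_sup_left (α := StarSubalgebra ℂ (Mat N)) (hS x hx))
      (fun x hx => le_sup_right (α := StarSubalgebra ℂ (Mat N)) (hT x hx))
  exact fun x hx => this hx

lemma theta_condExp_apply_eq (hΘ : IsGrading Θ) {S : StarSubalgebra ℂ (Mat N)}
    (hS : ThetaInvariant Θ S) {E : Mat N →ₗ[ℂ] Mat N} (hE : IsCondExp S E)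
    (heven : ∀ x, (Θ x * ρ).trace = (x * ρ).trace) : Θ (E ρ) = E ρ := by
  refine (hE.apply_eq_of_forall_trace_mul_eq (hS _ (hE.1 ρ)) fun b hb => ?_).symm
  calc (b * ρ).trace = (Θ b * ρ).trace := (heven b).symm
    _ = (Θ b * E ρ).trace := hE.2.2 ρ _ (hS b hb)
    _ = (b * Θ (E ρ)).trace := by rw [← Matrix.trace_map' Θ, map_mul, hΘ]

end Grading

lemma star_eq_inv_smul_of_mul_self_eq_smul {A : Type*} [Ring A] [StarRing A] [Algebra ℂ A]
    {v : A} {c : ℂ} (hv : star v * v = 1) (hc : v * v = c • 1) : star v = c⁻¹ • v := by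
  have key : c • star v = v := by
    rw [← mul_smul_one, ← hc, ← mul_assoc, hv, one_mul]
  rcases eq_or_ne c 0 with rfl | hc0
  · rw [zero_smul] at key
    rw [← key, star_zero, smul_zero]
  · rw [eq_inv_smul_iff₀ hc0, key]

lemma exists_mul_self_eq_smul_one {Θ : Mat N ≃⋆ₐ[ℂ] Mat N} (hΘ : IsGrading Θ)
    {S : StarSubalgebra ℂ (Mat N)} (hS : ThetaInvariant Θ S) (hf : IsFactorSub S) {v : Mat N}
    (hvS : v ∈ S) (hv : v * star v = 1) (him : ∀ x ∈ S, star v * x * v = Θ x) :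
    ∃ c : ℂ, v * v = c • 1 := by
  have hswap : ∀ x ∈ S, x * v = v * Θ x := fun x hx => by
    rw [← him x hx, ← mul_assoc, ← mul_assoc, hv, one_mul]
  refine hf _ (mul_mem hvS hvS) fun x hx => ?_
  calc v * v * x = v * (Θ x * v) := by rw [hswap _ (hS x hx), hΘ, mul_assoc]
    _ = x * (v * v) := by rw [← mul_assoc, ← hswap x hx, mul_assoc]

lemma GradedComm.le_centralizer {Θ : Mat N ≃⋆ₐ[ℂ] Mat N} {A B : StarSubalgebra ℂ (Mat N)}
    (h : GradedComm Θ A B) {v : Mat N} (hvA : v ∈ A) (hv : Θ v = v) :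
    B ≤ StarSubalgebra.centralizer ℂ {v} := fun y hy =>
  (StarSubalgebra.mem_centralizer_iff ℂ).mpr fun _ hg => hg ▸
    ⟨(h v hvA y hy).1 (Or.inl hv),
      (h (star v) (star_mem hvA) y hy).1 (Or.inl (by rw [map_star, hv]))⟩

section JordanWigner

variable {Θ : Mat N ≃⋆ₐ[ℂ] Mat N} {S : StarSubalgebra ℂ (Mat N)} {v : Mat N} {c : ℂ}

lemma exists_eq_add_mul_of_mem_jwAlg (hS : S ≤ StarSubalgebra.centralizer ℂ {v})
    (hc : v * v = c • 1) (hsv : star v = c⁻¹ • v) {z : Mat N} (hz : z ∈ jwAlg Θ v S) :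
    ∃ z₁ z₂, z₁ ∈ S ∧ Θ z₁ = z₁ ∧ z₂ ∈ S ∧ Θ z₂ = -z₂ ∧ z = z₁ + v * z₂ := by
  have hcomm : ∀ y ∈ S, y * v = v * y := fun y hy =>
    (((StarSubalgebra.mem_centralizer_iff ℂ).mp (hS hy)) v rfl).1.symm
  induction hz using StarAlgebra.adjoin_induction with
  | mem x hx =>
    rcases hx with ⟨hxS, hxe⟩ | ⟨y, ⟨hyS, hyo⟩, rfl⟩
    · exact ⟨x, 0, hxS, hxe, zero_mem S, by simp, by simp⟩
    · exact ⟨0, y, zero_mem S, map_zero Θ, hyS, hyo, by simp⟩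
  | algebraMap r =>
    exact ⟨algebraMap ℂ (Mat N) r, 0, algebraMap_mem S r, AlgHomClass.commutes Θ r,
      zero_mem S, by simp, by simp⟩
  | add x y _ _ ihx ihy =>
    obtain ⟨x₁, x₂, hx₁, hx₁e, hx₂, hx₂o, rfl⟩ := ihx
    obtain ⟨y₁, y₂, hy₁, hy₁e, hy₂, hy₂o, rfl⟩ := ihy
    exact ⟨x₁ + y₁, x₂ + y₂, add_mem hx₁ hy₁, by rw [map_add, hx₁e, hy₁e],
      add_mem hx₂ hy₂, by rw [map_add, hx₂o, hy₂o, neg_add], by rw [mul_add]; abel⟩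
  | mul x y _ _ ihx ihy =>
    obtain ⟨x₁, x₂, hx₁, hx₁e, hx₂, hx₂o, rfl⟩ := ihx
    obtain ⟨y₁, y₂, hy₁, hy₁e, hy₂, hy₂o, rfl⟩ := ihy
    refine ⟨x₁ * y₁ + c • (x₂ * y₂), x₁ * y₂ + x₂ * y₁,
      add_mem (mul_mem hx₁ hy₁) (SMulMemClass.smul_mem c (mul_mem hx₂ hy₂)),
      by rw [map_add, map_smul, map_mul, map_mul, hx₁e, hy₁e, hx₂o, hy₂o, neg_mul_neg],
      add_mem (mul_mem hx₁ hy₂) (mul_mem hx₂ hy₁),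
      by rw [map_add, map_mul, map_mul, hx₁e, hy₁e, hx₂o, hy₂o, mul_neg, neg_mul, neg_add], ?_⟩
    have hx₁v : x₁ * (v * y₂) = v * (x₁ * y₂) := by rw [← mul_assoc, hcomm x₁ hx₁, mul_assoc]
    have hx₂v : v * x₂ * (v * y₂) = c • (x₂ * y₂) := by
      rw [← mul_assoc, mul_assoc v, hcomm x₂ hx₂, ← mul_assoc, hc, smul_one_mul, smul_mul_assoc]
    rw [add_mul, mul_add, mul_add, hx₁v, hx₂v, mul_add, mul_assoc v x₂]
    abel
  | star x _ ihx =>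
    obtain ⟨x₁, x₂, hx₁, hx₁e, hx₂, hx₂o, rfl⟩ := ihx
    refine ⟨star x₁, c⁻¹ • star x₂, star_mem hx₁, by rw [map_star, hx₁e],
      SMulMemClass.smul_mem _ (star_mem hx₂), by rw [map_smul, map_star, hx₂o, star_neg, smul_neg],
      ?_⟩
    rw [star_add, star_mul, hsv, mul_smul_comm, hcomm _ (star_mem hx₂), ← mul_smul_comm]

lemma condExp_jwAlg_apply_eq (hΘ : IsGrading Θ) (hSinv : ThetaInvariant Θ S) (hv : Θ v = v)
    (hS : S ≤ StarSubalgebra.centralizer ℂ {v}) (hc : v * v = c • 1) (hsv : star v = c⁻¹ • v)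
    {E F : Mat N →ₗ[ℂ] Mat N} (hE : IsCondExp S E) (hF : IsCondExp (jwAlg Θ v S) F)
    {ρ : Mat N} (heven : ∀ x, (Θ x * ρ).trace = (x * ρ).trace) : F ρ = E ρ := by
  have hEe : Θ (E ρ) = E ρ := theta_condExp_apply_eq hΘ hSinv hE heven
  refine hF.apply_eq_of_forall_trace_mul_eq
    (StarAlgebra.subset_adjoin ℂ _ (Or.inl ⟨hE.1 ρ, hEe⟩)) fun z hz => ?_
  obtain ⟨z₁, z₂, hz₁, -, hz₂, hz₂o, rfl⟩ := exists_eq_add_mul_of_mem_jwAlg hS hc hsv hz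
  have hodd : Θ (v * z₂) = -(v * z₂) := by rw [map_mul, hv, hz₂o, mul_neg]
  have hoddE : Θ (v * z₂ * E ρ) = -(v * z₂ * E ρ) := by rw [map_mul, hodd, hEe, neg_mul]
  rw [add_mul, add_mul, Matrix.trace_add, Matrix.trace_add, hE.2.2 ρ z₁ hz₁,
    trace_mul_eq_zero_of_theta_eq_neg heven hodd, trace_eq_zero_of_theta_eq_neg hoddE]

end JordanWigner

theorem stmt14_general {N kA kB kC : ℕ}
    (Θ : Mat N ≃⋆ₐ[ℂ] Mat N) (hΘ : IsGrading Θ)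
    (SA SB SC : StarSubalgebra ℂ (Mat N))
    (hAinv : ThetaInvariant Θ SA) (hBinv : ThetaInvariant Θ SB) (hCinv : ThetaInvariant Θ SC)
    (hfA : IsFactorSub SA)
    (hABc : GradedComm Θ SA SB) (hACc : GradedComm Θ SA SC)
    (vA : Mat N) (hvA : vA ∈ SA)
    (hvAe : Θ vA = vA)
    (hvAu : star vA * vA = 1 ∧ vA * star vA = 1)
    (hvAim : ∀ x ∈ SA, star vA * x * vA = Θ x)
    (EAB EBC EB FBC FB : Mat N →ₗ[ℂ] Mat N)
    (hEBC : IsCondExp (SB ⊔ SC) EBC)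
    (hEB : IsCondExp SB EB)
    (hFBC : IsCondExp (jwAlg Θ vA (SB ⊔ SC)) FBC) (hFB : IsCondExp (jwAlg Θ vA SB) FB)
    (ρ : Mat N)
    (heven : ∀ x, tau (ρ * Θ x) = tau (ρ * x)) :
    Sres ρ N - Sres (EAB ρ) (kA * kB) - Sres (EBC ρ) (kB * kC) + Sres (EB ρ) kB = 0 ↔
      Sres ρ N - Sres (EAB ρ) (kA * kB) - Sres (FBC ρ) (kB * kC) + Sres (FB ρ) kB = 0 := by
  obtain ⟨c, hc⟩ := exists_mul_self_eq_smul_one hΘ hAinv hfA hvA hvAu.2 hvAim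
  have hsv := star_eq_inv_smul_of_mul_self_eq_smul hvAu.1 hc
  have heven' := trace_mul_theta_eq_of_tau_mul_theta_eq heven
  have hB := hABc.le_centralizer hvA hvAe
  have hBC := sup_le hB (hACc.le_centralizer hvA hvAe)
  rw [condExp_jwAlg_apply_eq hΘ (hBinv.sup hCinv) hvAe hBC hc hsv hEBC hFBC heven',
    condExp_jwAlg_apply_eq hΘ hBinv hvAe hB hc hsv hEB hFB heven']

/-- for a three-composed graded (CAR) system `(S_A, S_B, S_C)` with
implementing even unitaries `v_A, v_B` and the Jordan–Wigner transformed subalgebras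
`Ã_B = jwAlg Θ v_A S_B`, `Ã_BC = jwAlg Θ v_A (S_B ⊔ S_C)` (and `Ã_AB = A_AB`), an even
state `ψ` (τ-density `ρ`) satisfies the strong additivity of von Neumann entropy for the
CAR triple iff it satisfies it for the Jordan–Wigner tensor-product triple. -/
theorem stmt14 {N kA kB kC : ℕ} (hkA : 0 < kA) (hkB : 0 < kB) (hkC : 0 < kC)
    (hN : N = kA * kB * kC)
    (Θ : Mat N ≃⋆ₐ[ℂ] Mat N) (hΘ : IsGrading Θ)
    (SA SB SC : StarSubalgebra ℂ (Mat N))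
    (hAinv : ThetaInvariant Θ SA) (hBinv : ThetaInvariant Θ SB) (hCinv : ThetaInvariant Θ SC)
    (hfA : IsFactorSub SA) (hfB : IsFactorSub SB) (hfC : IsFactorSub SC)
    (hABc : GradedComm Θ SA SB) (hACc : GradedComm Θ SA SC) (hBCc : GradedComm Θ SB SC)
    (hgen : SA ⊔ SB ⊔ SC = ⊤)
    (vA vB : Mat N) (hvA : vA ∈ SA) (hvB : vB ∈ SB)
    (hvAe : Θ vA = vA) (hvBe : Θ vB = vB)
    (hvAu : star vA * vA = 1 ∧ vA * star vA = 1)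
    (hvBu : star vB * vB = 1 ∧ vB * star vB = 1)
    (hvAim : ∀ x ∈ SA, star vA * x * vA = Θ x)
    (hvBim : ∀ x ∈ SB, star vB * x * vB = Θ x)
    (EAB EBC EB FBC FB : Mat N →ₗ[ℂ] Mat N)
    (hEAB : IsCondExp (SA ⊔ SB) EAB) (hEBC : IsCondExp (SB ⊔ SC) EBC)
    (hEB : IsCondExp SB EB)
    (hFBC : IsCondExp (jwAlg Θ vA (SB ⊔ SC)) FBC) (hFB : IsCondExp (jwAlg Θ vA SB) FB)
    (hszAB : HasMatSize (SA ⊔ SB) (kA * kB)) (hszBC : HasMatSize (SB ⊔ SC) (kB * kC))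
    (hszB : HasMatSize SB kB)
    (hszBCjw : HasMatSize (jwAlg Θ vA (SB ⊔ SC)) (kB * kC))
    (hszBjw : HasMatSize (jwAlg Θ vA SB) kB)
    (ρ : Mat N) (hρ : IsTauDensity ρ)
    (heven : ∀ x, tau (ρ * Θ x) = tau (ρ * x)) :
    Sres ρ N - Sres (EAB ρ) (kA * kB) - Sres (EBC ρ) (kB * kC) + Sres (EB ρ) kB = 0 ↔
      Sres ρ N - Sres (EAB ρ) (kA * kB) - Sres (FBC ρ) (kB * kC) + Sres (FB ρ) kB = 0 :=
  stmt14_general Θ hΘ SA SB SC hAinv hBinv hCinv hfA hABc hACc vA hvA hvAe hvAu hvAim EAB EBC EB FBC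
    FB hEBC hEB hFBC hFB ρ heven
end

section
/- Let k_A ∈ A_A^− and k_C ∈ A_C^− be odd elements of disjoint regions of a graded (CAR) system with ‖k_A‖ ≤ 1 and ‖k_C‖ ≤ 1, and set K := (1/2)(k_A* k_C − k_A k_C*). Then K is self-adjoint with ‖K‖ ≤ 1, and for every real λ with |λ| ≤ 1 the element ρ := 1 + λK is a density with respect to the tracial state τ on A_AC (i.e. ρ ≥ 0 and τ(ρ) = 1). -/
/-!
The odd elements `k_A^*` and `k_C` of disjoint regions anticommute, and taking adjoints, so do
`k_A` and `k_C^*`. Hence the two terms of `K` are minus each other's adjoints, which makes `K`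
self-adjoint, and each is a product of anticommuting matrices, hence traceless. Since
`‖K‖ ≤ ‖k_A‖ ‖k_C‖ ≤ 1`, the self-adjoint `λK` satisfies `-1 ≤ λK`, i.e. `1 + λK ≥ 0`.
-/

open scoped ComplexOrder

variable {N : ℕ}

open scoped Matrix.Norms.L2Operator

/-- The fermion hopping element `K = (1/2)(k_A^* k_C − k_A k_C^*)`. -/
noncomputable def hopK {N : ℕ} (kA kC : Mat N) : Mat N :=
  (1 / 2 : ℂ) • (star kA * kC - kA * star kC)

open scoped MatrixOrder

theorem IsSelfAdjoint.one_add_nonneg_of_norm_le_one {A : Type*} [CStarAlgebra A] [PartialOrder A]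
    [StarOrderedRing A] {a : A} (ha : IsSelfAdjoint a) (h : ‖a‖ ≤ 1) : 0 ≤ 1 + a := by
  have hle : -(1 : A) ≤ -algebraMap ℝ A ‖a‖ := by
    rw [neg_le_neg_iff, ← map_one (algebraMap ℝ A)]
    exact algebraMap_mono (β := A) h
  exact neg_le_iff_add_nonneg'.mp (hle.trans ha.neg_algebraMap_norm_le_self)

theorem Matrix.trace_mul_eq_zero_of_mul_add_mul_eq_zero {n R : Type*} [Fintype n] [CommRing R]
    [NoZeroDivisors R] [NeZero (2 : R)] {a b : Matrix n n R} (h : a * b + b * a = 0) :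
    (a * b).trace = 0 := by
  have : 2 * (a * b).trace = 0 := by
    rw [two_mul]
    nth_rw 2 [Matrix.trace_mul_comm]
    rw [← Matrix.trace_add, h, Matrix.trace_zero]
  exact (mul_eq_zero.mp this).resolve_left two_ne_zero

theorem GradedComm.star_mul_add_mul_eq_zero {Θ : Mat N ≃⋆ₐ[ℂ] Mat N}
    {A C : StarSubalgebra ℂ (Mat N)} (h : GradedComm Θ A C) {x y : Mat N} (hx : x ∈ A)
    (hy : y ∈ C) (hxo : Θ x = -x) (hyo : Θ y = -y) : star x * y + y * star x = 0 :=
  (h _ (star_mem hx) _ hy).2 (by rw [map_star, hxo, star_neg]) hyo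

theorem tau_one_add (hN : 0 < N) {x : Mat N} (hx : x.trace = 0) : tau (1 + x) = 1 := by
  have hN' : (N : ℂ) ≠ 0 := by exact_mod_cast hN.ne'
  simp [tau, Matrix.trace_add, hx, hN']

theorem mul_star_add_star_mul_eq_zero_of_anticomm {R : Type*} [NonUnitalRing R] [StarRing R]
    {a c : R} (h : star a * c + c * star a = 0) : a * star c + star c * a = 0 := by
  simpa [add_comm] using congrArg star h

section hopK

variable {kA kC : Mat N}

theorem star_hopK_of_anticomm (h : star kA * kC + kC * star kA = 0) :
    star (hopK kA kC) = hopK kA kC := by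
  simp only [hopK, star_smul, star_sub, star_mul, star_star, eq_neg_of_add_eq_zero_right h,
    eq_neg_of_add_eq_zero_right (mul_star_add_star_mul_eq_zero_of_anticomm h), neg_sub_neg]
  norm_num

theorem trace_hopK_of_anticomm (h : star kA * kC + kC * star kA = 0) :
    (hopK kA kC).trace = 0 := by
  simp only [hopK, Matrix.trace_smul, Matrix.trace_sub,
    Matrix.trace_mul_eq_zero_of_mul_add_mul_eq_zero h,
    Matrix.trace_mul_eq_zero_of_mul_add_mul_eq_zero
      (mul_star_add_star_mul_eq_zero_of_anticomm h), sub_zero, smul_zero]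

theorem norm_hopK_le (kA kC : Mat N) : ‖hopK kA kC‖ ≤ ‖kA‖ * ‖kC‖ := by
  calc ‖hopK kA kC‖ ≤ ‖(1 / 2 : ℂ)‖ * (‖star kA * kC‖ + ‖kA * star kC‖) :=
        (norm_smul_le _ _).trans (by gcongr; exact norm_sub_le _ _)
    _ ≤ 1 / 2 * (‖kA‖ * ‖kC‖ + ‖kA‖ * ‖kC‖) := by
        norm_num
        gcongr <;> exact (norm_mul_le _ _).trans (by simp [norm_star])
    _ = ‖kA‖ * ‖kC‖ := by ring

end hopK

theorem stmt16_general {N : ℕ} (hN : 0 < N)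
    (Θ : Mat N ≃⋆ₐ[ℂ] Mat N)
    (SA SC : StarSubalgebra ℂ (Mat N))
    (hcomm : GradedComm Θ SA SC)
    (kA kC : Mat N) (hkA : kA ∈ SA) (hkC : kC ∈ SC)
    (hkAodd : Θ kA = -kA) (hkCodd : Θ kC = -kC)
    (hnA : ‖kA‖ ≤ 1) (hnC : ‖kC‖ ≤ 1)
    (lam : ℝ) (hlam : |lam| ≤ 1) :
    star (hopK kA kC) = hopK kA kC ∧ ‖hopK kA kC‖ ≤ 1 ∧
      ((1 : Mat N) + (lam : ℂ) • hopK kA kC).PosSemidef ∧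
      tau ((1 : Mat N) + (lam : ℂ) • hopK kA kC) = 1 := by
  have hanti := hcomm.star_mul_add_mul_eq_zero hkA hkC hkAodd hkCodd
  have hsa := star_hopK_of_anticomm hanti
  have hnorm : ‖hopK kA kC‖ ≤ 1 :=
    (norm_hopK_le kA kC).trans (mul_le_one₀ hnA (norm_nonneg _) hnC)
  have hnorm_smul : ‖(lam : ℂ) • hopK kA kC‖ ≤ 1 := by
    rw [norm_smul, Complex.norm_real, Real.norm_eq_abs]
    exact mul_le_one₀ hlam (norm_nonneg _) hnorm
  refine ⟨hsa, hnorm, ?_, tau_one_add hN ?_⟩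
  · exact Matrix.nonneg_iff_posSemidef.mp
      ((IsSelfAdjoint.smul (Complex.conj_ofReal lam) hsa).one_add_nonneg_of_norm_le_one
        hnorm_smul)
  · rw [Matrix.trace_smul, trace_hopK_of_anticomm hanti, smul_zero]

/-- for odd elements `k_A ∈ A_A^-`, `k_C ∈ A_C^-` of disjoint regions with
`‖k_A‖ ≤ 1`, `‖k_C‖ ≤ 1` (ℓ²-operator norm), the hopping element
`K = (1/2)(k_A^* k_C − k_A k_C^*)` is self-adjoint with `‖K‖ ≤ 1`, and `1 + λ K` is a
density with respect to the tracial state for every real `λ` with `|λ| ≤ 1`. -/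
theorem stmt16 {N : ℕ} (hN : 0 < N)
    (Θ : Mat N ≃⋆ₐ[ℂ] Mat N) (hΘ : IsGrading Θ)
    (SA SC : StarSubalgebra ℂ (Mat N))
    (hAinv : ThetaInvariant Θ SA) (hCinv : ThetaInvariant Θ SC)
    (hcomm : GradedComm Θ SA SC)
    (htauprod : ∀ x ∈ SA, ∀ y ∈ SC, tau (x * y) = tau x * tau y)
    (kA kC : Mat N) (hkA : kA ∈ SA) (hkC : kC ∈ SC)
    (hkAodd : Θ kA = -kA) (hkCodd : Θ kC = -kC)
    (hnA : ‖kA‖ ≤ 1) (hnC : ‖kC‖ ≤ 1)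
    (lam : ℝ) (hlam : |lam| ≤ 1) :
    star (hopK kA kC) = hopK kA kC ∧ ‖hopK kA kC‖ ≤ 1 ∧
      ((1 : Mat N) + (lam : ℂ) • hopK kA kC).PosSemidef ∧
      tau ((1 : Mat N) + (lam : ℂ) • hopK kA kC) = 1 :=
  stmt16_general hN Θ SA SC hcomm kA kC hkA hkC hkAodd hkCodd hnA hnC lam hlam
end
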